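/- Any loop-free multigraph whose degree sequence is graphical can be transformed into a simple graph by a finite sequence of admissible double edge swaps. -/
import Mathlib


open Finset

/-- A loopy multigraph on vertex set `V`: each unordered pair (possibly a loop)
has a multiplicity. -/
abbrev Multigraph (V : Type*) := Sym2 V → ℕ

variable {V : Type*}

/-- The degree of a vertex: each incident edge counts with multiplicity,
and a loop counts twice. -/
def mdeg [Fintype V] (G : Multigraph V) (v : V) : ℕ :=
  (∑ u : V, G s(v, u)) + G s(v, v)

/-- A multigraph is simple if it has no loops and every multiplicity is at most one. -/
def IsSimpleMG (G : Multigraph V) : Prop :=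
  (∀ v : V, G s(v, v) = 0) ∧ ∀ e : Sym2 V, G e ≤ 1

/-- A multigraph is loop-free if it has no loops. -/
def LoopFree (G : Multigraph V) : Prop := ∀ v : V, G s(v, v) = 0

/-- A degree function is graphical if it is realized by some simple graph. -/
def GraphicalDeg [Fintype V] (d : V → ℕ) : Prop :=
  ∃ H : Multigraph V, IsSimpleMG H ∧ ∀ v : V, mdeg H v = d v

/-- The result of the double edge swap removing one copy each of `{v1,v2}` and
`{v3,v4}` and adding one copy each of `{v2,v3}` and `{v4,v1}`. -/
def swapped [DecidableEq V] (G : Multigraph V) (v1 v2 v3 v4 : V) : Multigraph V :=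
  fun e => G e - (if e = s(v1, v2) then 1 else 0) - (if e = s(v3, v4) then 1 else 0)
    + (if e = s(v2, v3) then 1 else 0) + (if e = s(v4, v1) then 1 else 0)

/-- The edges `{v1,v2}` and `{v3,v4}` share no vertex. -/
def NotIncident (v1 v2 v3 v4 : V) : Prop :=
  v1 ≠ v3 ∧ v1 ≠ v4 ∧ v2 ≠ v3 ∧ v2 ≠ v4

/-- One admissible double edge swap: the two removed edges exist, are not incident,
and at least one of them is a loop or has multiplicity at least two. -/
def AdmissibleStep [DecidableEq V] (G G' : Multigraph V) : Prop :=
  ∃ v1 v2 v3 v4 : V, NotIncident v1 v2 v3 v4 ∧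
    1 ≤ G s(v1, v2) ∧ 1 ≤ G s(v3, v4) ∧
    (v1 = v2 ∨ v3 = v4 ∨ 2 ≤ G s(v1, v2) ∨ 2 ≤ G s(v3, v4)) ∧
    G' = swapped G v1 v2 v3 v4

private lemma exists_lt_of_sum_eq [Fintype V] {f g : V → ℕ}
    (h : ∑ u, f u = ∑ u, g u) {z : V} (hz : g z < f z) : ∃ y, f y < g y := by
  by_contra hc
  push_neg at hc
  have : ∑ u, g u < ∑ u, f u :=
    Finset.sum_lt_sum (fun i _ => hc i) ⟨z, Finset.mem_univ z, hz⟩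
  omega

private lemma sum_sub_eq [Fintype V] {f g : V → ℕ}
    (h : ∑ u, f u = ∑ u, g u) :
    ∑ u, (f u - g u) = ∑ u, (g u - f u) := by
  have h1 : ∀ u ∈ Finset.univ, f u - g u + g u = g u - f u + f u := fun u _ => by omega
  have h2 := Finset.sum_congr rfl h1
  rw [Finset.sum_add_distrib, Finset.sum_add_distrib] at h2
  omega

private lemma main_exists [Fintype V] [DecidableEq V] {G H : Multigraph V}
    (hGlf : LoopFree G) (hH : IsSimpleMG H) (hdeg : ∀ v, mdeg G v = mdeg H v)
    {a b : V} (hGab : 2 ≤ G s(a, b)) :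
    ∃ u w, a ≠ u ∧ a ≠ w ∧ b ≠ u ∧ b ≠ w ∧ u ≠ w ∧
      H s(u, w) < G s(u, w) ∧
      (G s(a, u) < H s(a, u) ∨ G s(b, w) < H s(b, w)) := by
  have row : ∀ v, ∑ u, G s(v, u) = ∑ u, H s(v, u) := by
    intro v
    have h := hdeg v
    simp only [mdeg, hGlf v, hH.1 v, add_zero] at h
    exact h
  have hab' : H s(a, b) < G s(a, b) := lt_of_le_of_lt (hH.2 _) (by omega)
  have hab : a ≠ b := by
    rintro rfl
    have := hGlf a
    omega
  by_contra hcon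
  push_neg at hcon
  have claimA : ∀ u, G s(a, u) < H s(a, u) → H s(u, b) < G s(u, b) := by
    intro u hu
    have hua : u ≠ a := by
      intro h
      rw [h, hGlf a, hH.1 a] at hu
      omega
    have hub : u ≠ b := by
      rintro rfl
      omega
    have hz : ∃ z, H s(u, z) < G s(u, z) := by
      refine exists_lt_of_sum_eq (row u).symm (z := a) ?_
      rw [Sym2.eq_swap]
      exact hu
    obtain ⟨z, hz⟩ := hz
    have hzu : z ≠ u := by
      intro h
      rw [h, hGlf u] at hz
      have := hH.1 u
      omega
    have hza : z ≠ a := by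
      rintro rfl
      rw [Sym2.eq_swap] at hz
      omega
    rcases eq_or_ne z b with rfl | hzb
    · exact hz
    · have := hcon u z hua.symm hza.symm hub.symm hzb.symm hzu.symm hz
      omega
  have claimB : ∀ w, G s(b, w) < H s(b, w) → H s(w, a) < G s(w, a) := by
    intro w hw
    have hwb : w ≠ b := by
      intro h
      rw [h, hGlf b, hH.1 b] at hw
      omega
    have hwa : w ≠ a := by
      rintro rfl
      rw [Sym2.eq_swap] at hw
      omega
    have hz : ∃ z, H s(w, z) < G s(w, z) := by
      refine exists_lt_of_sum_eq (row w).symm (z := b) ?_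
      rw [Sym2.eq_swap]
      exact hw
    obtain ⟨z, hz⟩ := hz
    have hzw : z ≠ w := by
      intro h
      rw [h, hGlf w] at hz
      have := hH.1 w
      omega
    have hzb : z ≠ b := by
      rintro rfl
      rw [Sym2.eq_swap] at hz
      omega
    rcases eq_or_ne z a with rfl | hza
    · exact hz
    · have he : s(z, w) = s(w, z) := Sym2.eq_swap
      have hz' : H s(z, w) < G s(z, w) := by
        rw [he]
        exact hz
      have := hcon z w hza.symm hwa.symm hzb.symm hwb.symm hzw hz'
      omega
  -- counting
  set U := Finset.univ.filter (fun u => G s(a, u) < H s(a, u)) with hUdef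
  set W := Finset.univ.filter (fun w => G s(b, w) < H s(b, w)) with hWdef
  have cardsum : ∀ (x : V), (Finset.univ.filter (fun u => G s(x, u) < H s(x, u))).card
      = ∑ u, (H s(x, u) - G s(x, u)) := by
    intro x
    rw [Finset.card_filter]
    refine Finset.sum_congr rfl (fun u _ => ?_)
    have := hH.2 s(x, u)
    split_ifs with h <;> omega
  have excsum : ∀ (x : V), ∑ u, (G s(x, u) - H s(x, u))
      = (Finset.univ.filter (fun u => G s(x, u) < H s(x, u))).card := by
    intro x
    rw [cardsum x]
    exact sum_sub_eq (row x)
  -- lower bound at a : 1 + W.card ≤ ∑ u, (G s(a,u) - H s(a,u))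
  have lba : 1 + W.card ≤ ∑ u, (G s(a, u) - H s(a, u)) := by
    have hbW : b ∉ W := by
      simp only [hWdef, Finset.mem_filter, Finset.mem_univ, true_and]
      rw [hGlf b, hH.1 b]
      omega
    have hterm : ∀ x ∈ insert b W, 1 ≤ G s(a, x) - H s(a, x) := by
      intro x hx
      rcases Finset.mem_insert.mp hx with rfl | hxW
      · omega
      · have hx' : G s(b, x) < H s(b, x) := (Finset.mem_filter.mp hxW).2
        have := claimB x hx'
        rw [Sym2.eq_swap] at this
        omega
    calc 1 + W.card = (insert b W).card • 1 := by
          rw [Finset.card_insert_of_notMem hbW, smul_eq_mul, mul_one]; omega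
      _ ≤ ∑ x ∈ insert b W, (G s(a, x) - H s(a, x)) := Finset.card_nsmul_le_sum _ _ _ hterm
      _ ≤ ∑ u, (G s(a, u) - H s(a, u)) :=
          Finset.sum_le_sum_of_subset (Finset.subset_univ _)
  have lbb : 1 + U.card ≤ ∑ u, (G s(b, u) - H s(b, u)) := by
    have haU : a ∉ U := by
      simp only [hUdef, Finset.mem_filter, Finset.mem_univ, true_and]
      rw [hGlf a, hH.1 a]
      omega
    have hterm : ∀ x ∈ insert a U, 1 ≤ G s(b, x) - H s(b, x) := by
      intro x hx
      rcases Finset.mem_insert.mp hx with rfl | hxU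
      · rw [Sym2.eq_swap]
        omega
      · have hx' : G s(a, x) < H s(a, x) := (Finset.mem_filter.mp hxU).2
        have := claimA x hx'
        rw [Sym2.eq_swap] at this
        omega
    calc 1 + U.card = (insert a U).card • 1 := by
          rw [Finset.card_insert_of_notMem haU, smul_eq_mul, mul_one]; omega
      _ ≤ ∑ x ∈ insert a U, (G s(b, x) - H s(b, x)) := Finset.card_nsmul_le_sum _ _ _ hterm
      _ ≤ ∑ u, (G s(b, u) - H s(b, u)) :=
          Finset.sum_le_sum_of_subset (Finset.subset_univ _)
  have e1 := excsum a
  have e2 := excsum b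
  rw [← hUdef] at e1
  rw [← hWdef] at e2
  omega

section Swap
variable [DecidableEq V]

private lemma sym2_ne {x y z w : V} (h1 : ¬(x = z ∧ y = w)) (h2 : ¬(x = w ∧ y = z)) :
    s(x, y) ≠ s(z, w) := by
  rw [Ne, Sym2.eq_iff]
  tauto

private lemma swap_key {G : Multigraph V} {v1 v2 v3 v4 : V}
    (h12 : v1 ≠ v2) (h13 : v1 ≠ v3) (h14 : v1 ≠ v4)
    (h23 : v2 ≠ v3) (h24 : v2 ≠ v4) (h34 : v3 ≠ v4)
    (hg1 : 1 ≤ G s(v1, v2)) (hg2 : 1 ≤ G s(v3, v4)) (e : Sym2 V) :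
    swapped G v1 v2 v3 v4 e + ((if e = s(v1, v2) then 1 else 0) + (if e = s(v3, v4) then 1 else 0))
      = G e + ((if e = s(v2, v3) then 1 else 0) + (if e = s(v4, v1) then 1 else 0)) := by
  have hA : s(v1, v2) ≠ s(v3, v4) := sym2_ne (by tauto) (by tauto)
  have hB : s(v1, v2) ≠ s(v2, v3) := sym2_ne (by tauto) (by tauto)
  have hC : s(v1, v2) ≠ s(v4, v1) := sym2_ne (by tauto) (by tauto)
  have hD : s(v3, v4) ≠ s(v2, v3) := sym2_ne (by tauto) (by tauto)
  have hE : s(v3, v4) ≠ s(v4, v1) := sym2_ne (by tauto) (by tauto)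
  have hF : s(v2, v3) ≠ s(v4, v1) := sym2_ne (by tauto) (by tauto)
  rcases eq_or_ne e s(v1, v2) with rfl | he1
  · simp only [swapped, if_pos rfl, if_neg hA, if_neg hB, if_neg hC, if_true]
    omega
  rcases eq_or_ne e s(v3, v4) with rfl | he2
  · simp only [swapped, if_pos rfl, if_neg hA.symm, if_neg hD, if_neg hE, if_true]
    omega
  rcases eq_or_ne e s(v2, v3) with rfl | he3
  · simp only [swapped, if_pos rfl, if_neg hB.symm, if_neg hD.symm, if_neg hF, if_true]
    omega
  rcases eq_or_ne e s(v4, v1) with rfl | he4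
  · simp only [swapped, if_pos rfl, if_neg hC.symm, if_neg hE.symm, if_neg hF.symm, if_true]
    omega
  · simp only [swapped, if_neg he1, if_neg he2, if_neg he3, if_neg he4]
    omega

private lemma cnt_eq [Fintype V] {x y : V} (hxy : x ≠ y) (v : V) :
    ((∑ u : V, if s(v, u) = s(x, y) then (1 : ℕ) else 0)
      + (if s(v, v) = s(x, y) then (1 : ℕ) else 0))
      = (if v = x then 1 else 0) + (if v = y then 1 else 0) := by
  have hloop : ¬ s(v, v) = s(x, y) := by
    rw [Sym2.eq_iff]
    rintro (⟨rfl, rfl⟩ | ⟨rfl, rfl⟩) <;> exact hxy rfl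
  rw [if_neg hloop, add_zero]
  rcases eq_or_ne v x with rfl | hvx
  · rw [if_pos rfl, if_neg hxy, add_zero]
    simp only [Sym2.congr_right]
    simp
  rcases eq_or_ne v y with hvy' | hvy
  · rw [if_neg hvx, if_pos hvy', zero_add]
    have he : s(x, y) = s(v, x) := by
      rw [← hvy']
      exact Sym2.eq_swap
    simp only [he, Sym2.congr_right]
    simp
  · rw [if_neg hvx, if_neg hvy, add_zero]
    have hcond : ∀ u : V, ¬ (s(v, u) = s(x, y)) := by
      intro u h
      rw [Sym2.eq_iff] at h
      rcases h with ⟨rfl, _⟩ | ⟨rfl, _⟩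
      · exact hvx rfl
      · exact hvy rfl
    simp [hcond]

private lemma mdeg_swapped [Fintype V] {G : Multigraph V} {v1 v2 v3 v4 : V}
    (h12 : v1 ≠ v2) (h13 : v1 ≠ v3) (h14 : v1 ≠ v4)
    (h23 : v2 ≠ v3) (h24 : v2 ≠ v4) (h34 : v3 ≠ v4)
    (hg1 : 1 ≤ G s(v1, v2)) (hg2 : 1 ≤ G s(v3, v4)) (v : V) :
    mdeg (swapped G v1 v2 v3 v4) v = mdeg G v := by
  have hsum := Finset.sum_congr rfl
    (fun u (_ : u ∈ Finset.univ) =>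
      swap_key h12 h13 h14 h23 h24 h34 hg1 hg2 s(v, u))
  rw [Finset.sum_add_distrib, Finset.sum_add_distrib, Finset.sum_add_distrib,
    Finset.sum_add_distrib] at hsum
  have hloop := swap_key h12 h13 h14 h23 h24 h34 hg1 hg2 s(v, v)
  have c12 := cnt_eq h12 v
  have c34 := cnt_eq h34 v
  have c23 := cnt_eq h23 v
  have c41 := cnt_eq (Ne.symm h14) v
  simp only [mdeg]
  omega

private lemma loopfree_swapped {G : Multigraph V} {v1 v2 v3 v4 : V}
    (h23 : v2 ≠ v3) (h41 : v4 ≠ v1) (hlf : LoopFree G) :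
    LoopFree (swapped G v1 v2 v3 v4) := by
  intro v
  have h3 : ¬ s(v, v) = s(v2, v3) := by
    rw [Sym2.eq_iff]
    rintro (⟨rfl, rfl⟩ | ⟨rfl, rfl⟩) <;> exact h23 rfl
  have h4 : ¬ s(v, v) = s(v4, v1) := by
    rw [Sym2.eq_iff]
    rintro (⟨rfl, rfl⟩ | ⟨rfl, rfl⟩) <;> exact h41 rfl
  simp only [swapped, if_neg h3, if_neg h4, hlf v]
  omega

end Swap

private lemma sym2_ne' {x y z w : V} (h1 : ¬(x = z ∧ y = w)) (h2 : ¬(x = w ∧ y = z)) :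
    s(x, y) ≠ s(z, w) := by
  rw [Ne, Sym2.eq_iff]
  tauto

private lemma dist_swapped_lt [Fintype V] [DecidableEq V] {G H : Multigraph V} {a b u w : V}
    (hab : a ≠ b) (hau : a ≠ u) (haw : a ≠ w) (hbu : b ≠ u) (hbw : b ≠ w) (huw : u ≠ w)
    (h1 : H s(a, b) < G s(a, b)) (h2 : H s(u, w) < G s(u, w))
    (h3 : G s(a, u) < H s(a, u) ∨ G s(b, w) < H s(b, w)) :
    ∑ e : Sym2 V, Nat.dist (swapped G b a u w e) (H e)
      < ∑ e : Sym2 V, Nat.dist (G e) (H e) := by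
  have hba : s(a, b) = s(b, a) := Sym2.eq_swap
  have hwb : s(b, w) = s(w, b) := Sym2.eq_swap
  rw [hba] at h1
  rw [hwb] at h3
  -- the four relevant pairs, all distinct
  have hA : s(b, a) ≠ s(u, w) := sym2_ne' (by tauto) (by tauto)
  have hB : s(b, a) ≠ s(a, u) := sym2_ne' (by tauto) (by tauto)
  have hC : s(b, a) ≠ s(w, b) := sym2_ne' (by tauto) (by tauto)
  have hD : s(u, w) ≠ s(a, u) := sym2_ne' (by tauto) (by tauto)
  have hE : s(u, w) ≠ s(w, b) := sym2_ne' (by tauto) (by tauto)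
  have hF : s(a, u) ≠ s(w, b) := sym2_ne' (by tauto) (by tauto)
  have hone : ∀ E : Sym2 V, ∑ e : Sym2 V, (if e = E then (1 : ℕ) else 0) = 1 := by
    intro E
    simp [Finset.sum_ite_eq']
  rcases h3 with h3 | h3
  · have key : ∀ e : Sym2 V, Nat.dist (swapped G b a u w e) (H e)
        + ((if e = s(b, a) then (1 : ℕ) else 0) + (if e = s(u, w) then (1 : ℕ) else 0)
          + (if e = s(a, u) then (1 : ℕ) else 0))
        ≤ Nat.dist (G e) (H e) + (if e = s(w, b) then (1 : ℕ) else 0) := by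
      intro e
      rcases eq_or_ne e s(b, a) with rfl | he1
      · simp only [swapped, if_pos rfl, if_neg hA, if_neg hB, if_neg hC, if_true, Nat.dist]
        omega
      rcases eq_or_ne e s(u, w) with rfl | he2
      · simp only [swapped, if_pos rfl, if_neg hA.symm, if_neg hD, if_neg hE, if_true, Nat.dist]
        omega
      rcases eq_or_ne e s(a, u) with rfl | he3
      · simp only [swapped, if_pos rfl, if_neg hB.symm, if_neg hD.symm, if_neg hF, if_true,
          Nat.dist]
        omega
      rcases eq_or_ne e s(w, b) with rfl | he4
      · simp only [swapped, if_pos rfl, if_neg hC.symm, if_neg hE.symm, if_neg hF.symm, if_true,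
          Nat.dist]
        omega
      · simp only [swapped, if_neg he1, if_neg he2, if_neg he3, if_neg he4, Nat.sub_zero, add_zero]
        omega
    have hsum := Finset.sum_le_sum (fun e (_ : e ∈ Finset.univ) => key e)
    rw [Finset.sum_add_distrib, Finset.sum_add_distrib, Finset.sum_add_distrib,
      Finset.sum_add_distrib, hone, hone, hone, hone] at hsum
    omega
  · have key : ∀ e : Sym2 V, Nat.dist (swapped G b a u w e) (H e)
        + ((if e = s(b, a) then (1 : ℕ) else 0) + (if e = s(u, w) then (1 : ℕ) else 0)
          + (if e = s(w, b) then (1 : ℕ) else 0))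
        ≤ Nat.dist (G e) (H e) + (if e = s(a, u) then (1 : ℕ) else 0) := by
      intro e
      rcases eq_or_ne e s(b, a) with rfl | he1
      · simp only [swapped, if_pos rfl, if_neg hA, if_neg hB, if_neg hC, if_true, Nat.dist]
        omega
      rcases eq_or_ne e s(u, w) with rfl | he2
      · simp only [swapped, if_pos rfl, if_neg hA.symm, if_neg hD, if_neg hE, if_true, Nat.dist]
        omega
      rcases eq_or_ne e s(w, b) with rfl | he4
      · simp only [swapped, if_pos rfl, if_neg hC.symm, if_neg hE.symm, if_neg hF.symm, if_true,
          Nat.dist]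
        omega
      rcases eq_or_ne e s(a, u) with rfl | he3
      · simp only [swapped, if_pos rfl, if_neg hB.symm, if_neg hD.symm, if_neg hF, if_true,
          Nat.dist]
        omega
      · simp only [swapped, if_neg he1, if_neg he2, if_neg he3, if_neg he4, Nat.sub_zero, add_zero]
        omega
    have hsum := Finset.sum_le_sum (fun e (_ : e ∈ Finset.univ) => key e)
    rw [Finset.sum_add_distrib, Finset.sum_add_distrib, Finset.sum_add_distrib,
      Finset.sum_add_distrib, hone, hone, hone, hone] at hsum
    omega

/-- Any loop-free multigraph whose degree sequence is graphical can be
transformed into a simple graph by a finite sequence of admissible double edge swaps. -/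
theorem loopfree_multigraph_reaches_simple [Fintype V] [DecidableEq V]
    (G : Multigraph V) (hlf : LoopFree G) (hgr : GraphicalDeg (mdeg G)) :
    ∃ G' : Multigraph V, Relation.ReflTransGen AdmissibleStep G G' ∧ IsSimpleMG G' := by
  obtain ⟨H, hHsimp, hHdeg⟩ := hgr
  suffices h : ∀ (n : ℕ) (G0 : Multigraph V), LoopFree G0 → (∀ v, mdeg G0 v = mdeg H v) →
      (∑ e : Sym2 V, Nat.dist (G0 e) (H e)) ≤ n →
      ∃ G' : Multigraph V, Relation.ReflTransGen AdmissibleStep G0 G' ∧ IsSimpleMG G' by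
    exact h _ G hlf (fun v => (hHdeg v).symm) le_rfl
  intro n
  induction n with
  | zero =>
    intro G0 hGlf hGdeg hle
    refine ⟨G0, Relation.ReflTransGen.refl, hGlf, fun e => ?_⟩
    have h0 : ∀ e ∈ Finset.univ, Nat.dist (G0 e) (H e) = 0 :=
      Finset.sum_eq_zero_iff.mp (Nat.le_zero.mp hle)
    have he := h0 e (Finset.mem_univ e)
    have h2 := hHsimp.2 e
    simp only [Nat.dist] at he
    omega
  | succ n ih =>
    intro G0 hGlf hGdeg hle
    by_cases hs : IsSimpleMG G0
    · exact ⟨G0, Relation.ReflTransGen.refl, hs⟩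
    have hmult : ∃ a b : V, 2 ≤ G0 s(a, b) := by
      by_contra hc
      push_neg at hc
      refine hs ⟨hGlf, fun e => ?_⟩
      induction e using Sym2.inductionOn with
      | hf x y => have := hc x y; omega
    obtain ⟨a, b, hab2⟩ := hmult
    have hab : a ≠ b := by
      intro h
      rw [h, hGlf b] at hab2
      omega
    obtain ⟨u, w, hau, haw, hbu, hbw, huw, hexc, hdef⟩ := main_exists hGlf hHsimp hGdeg hab2
    have hba : s(a, b) = s(b, a) := Sym2.eq_swap
    have hg1 : 1 ≤ G0 s(b, a) := by rw [← hba]; omega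
    have hg2 : 1 ≤ G0 s(u, w) := by omega
    have hstep : AdmissibleStep G0 (swapped G0 b a u w) :=
      ⟨b, a, u, w, ⟨hbu, hbw, hau, haw⟩, hg1, hg2,
        Or.inr (Or.inr (Or.inl (by rw [← hba]; exact hab2))), rfl⟩
    have hlf' : LoopFree (swapped G0 b a u w) := loopfree_swapped hau (Ne.symm hbw) hGlf
    have hdeg' : ∀ v, mdeg (swapped G0 b a u w) v = mdeg H v := fun v =>
      (mdeg_swapped (Ne.symm hab) hbu hbw hau haw huw hg1 hg2 v).trans (hGdeg v)
    have h1 : H s(a, b) < G0 s(a, b) := lt_of_le_of_lt (hHsimp.2 _) (by omega)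
    have hlt := dist_swapped_lt hab hau haw hbu hbw huw h1 hexc hdef
    obtain ⟨G', hR, hS⟩ := ih (swapped G0 b a u w) hlf' hdeg' (by omega)
    exact ⟨G', Relation.ReflTransGen.head hstep hR, hS⟩
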